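/- Fix λ ≥ 0, an index set Ω, matrices Y (N×T), I_S (N×T), and B (T×K) with orthonormal columns. Define f_λ(W, μ) = (1/2)‖P_Ω(Y − WB' − μ I_S)‖_F² + λ‖W‖_* and Q_λ(W | W̃, μ) = (1/2)‖P_Ω(Y − μ I_S) + P_Ω^⊥(W̃ B') − WB'‖_F² + λ‖W‖_*. Then for all W, W̃ and μ: f_λ(W, μ) ≤ Q_λ(W | W̃, μ), with equality when W = W̃. -/

import Mathlib

/-!
The surrogate residual agrees with the residual of `f_λ` on `Ω` and equals
`P_Ω^⊥((W̃ - W)B')` off `Ω`. Since the Frobenius norm splits over disjoint supports,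
`Q_λ(W | W̃, μ) = f_λ(W, μ) + ½‖P_Ω^⊥((W̃ - W)B')‖_F²`, and the last term vanishes at `W = W̃`.
-/

open Matrix

def projOmega {N T : ℕ} (Ω : Finset (Fin N × Fin T)) (A : Matrix (Fin N) (Fin T) ℝ) :
    Matrix (Fin N) (Fin T) ℝ :=
  fun i j => if (i, j) ∈ Ω then A i j else 0

def frobSq {m n : Type*} [Fintype m] [Fintype n] (A : Matrix m n ℝ) : ℝ :=
  ∑ i, ∑ j, (A i j) ^ 2

/-- Nuclear norm: the singular values are the square roots of the eigenvalues of `Aᴴ A`. -/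
noncomputable def nuclearNorm {N K : ℕ} (A : Matrix (Fin N) (Fin K) ℝ) : ℝ :=
  ∑ i, Real.sqrt ((Matrix.isHermitian_conjTranspose_mul_self A).eigenvalues i)

theorem frobSq_nonneg {m n : Type*} [Fintype m] [Fintype n] (A : Matrix m n ℝ) :
    0 ≤ frobSq A := by
  unfold frobSq
  positivity

@[simp]
theorem frobSq_zero {m n : Type*} [Fintype m] [Fintype n] : frobSq (0 : Matrix m n ℝ) = 0 := by
  simp [frobSq]

section projOmega

variable {N T : ℕ} (Ω : Finset (Fin N × Fin T))

@[simp]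
theorem projOmega_zero : projOmega Ω 0 = 0 := by
  ext i j
  simp [projOmega]

theorem projOmega_add_compl_sub (A Z X : Matrix (Fin N) (Fin T) ℝ) :
    projOmega Ω A + (Z - projOmega Ω Z) - X
      = projOmega Ω (A - X) + ((Z - X) - projOmega Ω (Z - X)) := by
  ext i j
  by_cases h : (i, j) ∈ Ω <;> simp [projOmega, h]

theorem frobSq_projOmega_add_compl (A C : Matrix (Fin N) (Fin T) ℝ) :
    frobSq (projOmega Ω A + (C - projOmega Ω C))
      = frobSq (projOmega Ω A) + frobSq (C - projOmega Ω C) := by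
  simp only [frobSq, ← Finset.sum_add_distrib]
  refine Finset.sum_congr rfl fun i _ => Finset.sum_congr rfl fun j _ => ?_
  by_cases h : (i, j) ∈ Ω <;> simp [projOmega, h]

end projOmega

theorem csi_majorization_general {N T K : ℕ} (lam : ℝ)
    (Ω : Finset (Fin N × Fin T))
    (Y IS : Matrix (Fin N) (Fin T) ℝ)
    (B : Matrix (Fin T) (Fin K) ℝ)
    (f Q : Matrix (Fin N) (Fin K) ℝ → Matrix (Fin N) (Fin K) ℝ → ℝ → ℝ)
    (hf : ∀ W Wt μ, f W Wt μ =
      (1 / 2) * frobSq (projOmega Ω (Y - W * Bᵀ - μ • IS)) + lam * nuclearNorm W)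
    (hQ : ∀ W Wt μ, Q W Wt μ =
      (1 / 2) * frobSq (projOmega Ω (Y - μ • IS)
          + (Wt * Bᵀ - projOmega Ω (Wt * Bᵀ)) - W * Bᵀ) + lam * nuclearNorm W) :
    ∀ (W Wt : Matrix (Fin N) (Fin K) ℝ) (μ : ℝ),
      f W Wt μ ≤ Q W Wt μ ∧ f W W μ = Q W W μ := by
  have hQf : ∀ W Wt μ, Q W Wt μ = f W Wt μ
      + (1 / 2) * frobSq ((Wt - W) * Bᵀ - projOmega Ω ((Wt - W) * Bᵀ)) := by
    intro W Wt μ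
    rw [hQ, hf, projOmega_add_compl_sub, frobSq_projOmega_add_compl, Matrix.sub_mul,
      sub_right_comm Y (W * Bᵀ)]
    ring
  intro W Wt μ
  constructor
  · linarith [hQf W Wt μ, frobSq_nonneg ((Wt - W) * Bᵀ - projOmega Ω ((Wt - W) * Bᵀ))]
  · simp [hQf]

/-- the CSI objective `f_λ` is majorized by the surrogate `Q_λ`,
with equality when `W = W̃`. -/
theorem csi_majorization {N T K : ℕ} (lam : ℝ) (hlam : 0 ≤ lam)
    (Ω : Finset (Fin N × Fin T))
    (Y IS : Matrix (Fin N) (Fin T) ℝ)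
    (B : Matrix (Fin T) (Fin K) ℝ) (hB : Bᵀ * B = 1)
    (f Q : Matrix (Fin N) (Fin K) ℝ → Matrix (Fin N) (Fin K) ℝ → ℝ → ℝ)
    (hf : ∀ W Wt μ, f W Wt μ =
      (1 / 2) * frobSq (projOmega Ω (Y - W * Bᵀ - μ • IS)) + lam * nuclearNorm W)
    (hQ : ∀ W Wt μ, Q W Wt μ =
      (1 / 2) * frobSq (projOmega Ω (Y - μ • IS)
          + (Wt * Bᵀ - projOmega Ω (Wt * Bᵀ)) - W * Bᵀ) + lam * nuclearNorm W) :
    ∀ (W Wt : Matrix (Fin N) (Fin K) ℝ) (μ : ℝ),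
      f W Wt μ ≤ Q W Wt μ ∧ f W W μ = Q W W μ :=
  csi_majorization_general lam Ω Y IS B f Q hf hQ
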